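/- In the two-level model with M_A ∩ M_B = ∅ and 0 < p₀ < p_A, p_B < 1, if K₁ ⊆ M satisfies M_B ⊆ K₁ and K₁ ∩ M_A = ∅, then for any K ⊆ M the likelihood ratio satisfies P(K|B)/P(K|A) ≤ P(K₁|B)/P(K₁|A). That is, the ratio of dialect-B to dialect-A probability is maximized over message patterns by those containing all of M_B and none of M_A. -/

import Mathlib

/-!
Both likelihoods factor over the sites of `M` into Bernoulli factors, so the likelihood ratio
is a product of per-site ratios. At a site of `M_B` that ratio is `p_B / p₀` or
`(1 - p_B) / (1 - p₀)`, at a site of `M_A` it is `p₀ / p_A` or `(1 - p₀) / (1 - p_A)`, and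
elsewhere it is `1`; since `p₀ < p_A, p_B`, the pattern `K₁` picks the larger value at every site.
-/

open Finset

namespace TwoLevelModel

variable {ι : Type*} [DecidableEq ι]

def bernoulliLik (p : ℝ) (b : Prop) [Decidable b] : ℝ := if b then p else 1 - p

theorem bernoulliLik_pos {p : ℝ} (hp₀ : 0 < p) (hp₁ : p < 1) (b : Prop) [Decidable b] :
    0 < bernoulliLik p b := by
  unfold bernoulliLik
  split_ifs <;> linarith

theorem bernoulliLik_div_le_div {p q : ℝ} (hp₀ : 0 < p) (hp₁ : p < 1) (hpq : p ≤ q)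
    (b : Prop) [Decidable b] : bernoulliLik q b / bernoulliLik p b ≤ q / p := by
  unfold bernoulliLik
  split_ifs
  · rfl
  · rw [div_le_div_iff₀ (by linarith) hp₀]
    nlinarith

theorem bernoulliLik_div_le_one_sub_div {p q : ℝ} (hq₀ : 0 < q) (hq₁ : q < 1) (hpq : p ≤ q)
    (b : Prop) [Decidable b] : bernoulliLik p b / bernoulliLik q b ≤ (1 - p) / (1 - q) := by
  unfold bernoulliLik
  split_ifs
  · rw [div_le_div_iff₀ hq₀ (by linarith)]
    nlinarith
  · rfl

def siteProb (S : Finset ι) (p₀ q : ℝ) (x : ι) : ℝ := if x ∈ S then q else p₀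

theorem bernoulliLik_siteProb_pos {S : Finset ι} {p₀ q : ℝ} (hp₀ : 0 < p₀) (hp₁ : p₀ < 1)
    (hq₀ : 0 < q) (hq₁ : q < 1) (x : ι) (b : Prop) [Decidable b] :
    0 < bernoulliLik (siteProb S p₀ q x) b := by
  unfold siteProb
  split_ifs
  · exact bernoulliLik_pos hq₀ hq₁ b
  · exact bernoulliLik_pos hp₀ hp₁ b

-- `likelihood M S p₀ q K` is the paper's `P(K | ·)` for the dialect with marked set `S` and rate `q`.
def likelihood (M S : Finset ι) (p₀ q : ℝ) (K : Finset ι) : ℝ :=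
  p₀ ^ #(K ∩ (M \ S)) * (1 - p₀) ^ #((M \ K) ∩ (M \ S)) * q ^ #(K ∩ S) *
    (1 - q) ^ #((M \ K) ∩ S)

theorem likelihood_eq_prod {M K : Finset ι} (hK : K ⊆ M) (S : Finset ι) (p₀ q : ℝ) :
    likelihood M S p₀ q K = ∏ x ∈ M, bernoulliLik (siteProb S p₀ q x) (x ∈ K) := by
  simp only [bernoulliLik, siteProb, apply_ite (HSub.hSub (1 : ℝ)), prod_ite, prod_const,
    filter_filter]
  have e₁ : {x ∈ M | x ∈ K ∧ x ∈ S} = K ∩ S := by ext x; grind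
  have e₂ : {x ∈ M | x ∈ K ∧ x ∉ S} = K ∩ (M \ S) := by ext x; grind
  have e₃ : {x ∈ M | x ∉ K ∧ x ∈ S} = (M \ K) ∩ S := by ext x; grind
  have e₄ : {x ∈ M | x ∉ K ∧ x ∉ S} = (M \ K) ∩ (M \ S) := by ext x; grind
  rw [likelihood, e₁, e₂, e₃, e₄]
  ring

theorem siteRatio_le_of_subset_of_disjoint {M_A M_B K₁ : Finset ι} {p₀ p_A p_B : ℝ}
    (hp₀ : 0 < p₀) (h0A : p₀ < p_A) (h0B : p₀ < p_B) (hA1 : p_A < 1)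
    (hBK₁ : M_B ⊆ K₁) (hK₁A : Disjoint K₁ M_A) (K : Finset ι) (x : ι) :
    bernoulliLik (siteProb M_B p₀ p_B x) (x ∈ K) / bernoulliLik (siteProb M_A p₀ p_A x) (x ∈ K) ≤
      bernoulliLik (siteProb M_B p₀ p_B x) (x ∈ K₁) /
        bernoulliLik (siteProb M_A p₀ p_A x) (x ∈ K₁) := by
  by_cases hB : x ∈ M_B
  · have hK₁ : x ∈ K₁ := hBK₁ hB
    have hA : x ∉ M_A := disjoint_left.mp hK₁A hK₁
    simpa [siteProb, hB, hA, hK₁, bernoulliLik] using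
      bernoulliLik_div_le_div hp₀ (h0A.trans hA1) h0B.le (x ∈ K)
  by_cases hA : x ∈ M_A
  · have hK₁ : x ∉ K₁ := disjoint_right.mp hK₁A hA
    simpa [siteProb, hB, hA, hK₁, bernoulliLik] using
      bernoulliLik_div_le_one_sub_div (hp₀.trans h0A) hA1 h0A.le (x ∈ K)
  · have hp₁ := h0A.trans hA1
    simp only [siteProb, hA, hB, if_false]
    rw [div_self (bernoulliLik_pos hp₀ hp₁ _).ne', div_self (bernoulliLik_pos hp₀ hp₁ _).ne']

end TwoLevelModel

open TwoLevelModel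

theorem file_ratio_maximized_general
    {ι : Type*} [DecidableEq ι] (M M_A M_B : Finset ι)
    (p₀ p_A p_B : ℝ) (h00 : 0 < p₀) (h0A : p₀ < p_A) (h0B : p₀ < p_B)
    (hA1 : p_A < 1) (hB1 : p_B < 1)
    (K₁ : Finset ι) (hK₁ : K₁ ⊆ M) (hBsub : M_B ⊆ K₁) (hK₁A : K₁ ∩ M_A = ∅)
    (K : Finset ι) (hK : K ⊆ M) :
    (p₀ ^ ((K ∩ (M \ M_B)).card) * (1 - p₀) ^ (((M \ K) ∩ (M \ M_B)).card) *
      p_B ^ ((K ∩ M_B).card) * (1 - p_B) ^ (((M \ K) ∩ M_B).card)) /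
    (p₀ ^ ((K ∩ (M \ M_A)).card) * (1 - p₀) ^ (((M \ K) ∩ (M \ M_A)).card) *
      p_A ^ ((K ∩ M_A).card) * (1 - p_A) ^ (((M \ K) ∩ M_A).card)) ≤
    (p₀ ^ ((K₁ ∩ (M \ M_B)).card) * (1 - p₀) ^ (((M \ K₁) ∩ (M \ M_B)).card) *
      p_B ^ ((K₁ ∩ M_B).card) * (1 - p_B) ^ (((M \ K₁) ∩ M_B).card)) /
    (p₀ ^ ((K₁ ∩ (M \ M_A)).card) * (1 - p₀) ^ (((M \ K₁) ∩ (M \ M_A)).card) *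
      p_A ^ ((K₁ ∩ M_A).card) * (1 - p_A) ^ (((M \ K₁) ∩ M_A).card)) := by
  have hp₁ : p₀ < 1 := h0A.trans hA1
  change likelihood M M_B p₀ p_B K / likelihood M M_A p₀ p_A K ≤
    likelihood M M_B p₀ p_B K₁ / likelihood M M_A p₀ p_A K₁
  simp only [likelihood_eq_prod hK, likelihood_eq_prod hK₁, ← prod_div_distrib]
  refine prod_le_prod (fun x _ => div_nonneg ?_ ?_) fun x _ =>
    siteRatio_le_of_subset_of_disjoint h00 h0A h0B hA1 hBsub
      (disjoint_iff_inter_eq_empty.mpr hK₁A) K x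
  · exact (bernoulliLik_siteProb_pos h00 hp₁ (h00.trans h0B) hB1 x _).le
  · exact (bernoulliLik_siteProb_pos h00 hp₁ (h00.trans h0A) hA1 x _).le

theorem file_ratio_maximized
    {ι : Type*} [DecidableEq ι] (M M_A M_B : Finset ι)
    (hMA : M_A ⊆ M) (hMB : M_B ⊆ M) (hdisj : M_A ∩ M_B = ∅)
    (p₀ p_A p_B : ℝ) (h00 : 0 < p₀) (h0A : p₀ < p_A) (h0B : p₀ < p_B)
    (hA1 : p_A < 1) (hB1 : p_B < 1)
    (K₁ : Finset ι) (hK₁ : K₁ ⊆ M) (hBsub : M_B ⊆ K₁) (hK₁A : K₁ ∩ M_A = ∅)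
    (K : Finset ι) (hK : K ⊆ M) :
    (p₀ ^ ((K ∩ (M \ M_B)).card) * (1 - p₀) ^ (((M \ K) ∩ (M \ M_B)).card) *
      p_B ^ ((K ∩ M_B).card) * (1 - p_B) ^ (((M \ K) ∩ M_B).card)) /
    (p₀ ^ ((K ∩ (M \ M_A)).card) * (1 - p₀) ^ (((M \ K) ∩ (M \ M_A)).card) *
      p_A ^ ((K ∩ M_A).card) * (1 - p_A) ^ (((M \ K) ∩ M_A).card)) ≤
    (p₀ ^ ((K₁ ∩ (M \ M_B)).card) * (1 - p₀) ^ (((M \ K₁) ∩ (M \ M_B)).card) *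
      p_B ^ ((K₁ ∩ M_B).card) * (1 - p_B) ^ (((M \ K₁) ∩ M_B).card)) /
    (p₀ ^ ((K₁ ∩ (M \ M_A)).card) * (1 - p₀) ^ (((M \ K₁) ∩ (M \ M_A)).card) *
      p_A ^ ((K₁ ∩ M_A).card) * (1 - p_A) ^ (((M \ K₁) ∩ M_A).card)) :=
  file_ratio_maximized_general M M_A M_B p₀ p_A p_B h00 h0A h0B hA1 hB1 K₁ hK₁ hBsub hK₁A K hK
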